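/- arXiv:1506.06405 — 4 statements merged into one kernel-verified Lean document; each statement's English description precedes it below -/
import Mathlib

section
/- Let Y be a square-integrable real random variable and let X_1, …, X_N be square-integrable reliable forecasts of Y, i.e., E[Y | σ(X_j)] = X_j almost surely for each j. Let X'' = E[Y | σ(X_1, …, X_N)] be the revealed aggregator. Then for every j, Var(X_j) ≤ Var(X''); in particular max_j Var(X_j) ≤ Var(X''). -/
open MeasureTheory ProbabilityTheory

/-- The conditional expectation of an `L²` function is in `L²`. -/
lemma memℒp_two_condexp_aux {α : Type*} {m : MeasurableSpace α} {F : MeasurableSpace α}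
    (hm : m ≤ F) (μ : Measure α) [IsProbabilityMeasure μ] {f : α → ℝ}
    (hf : MemLp f 2 μ) : MemLp (μ[f|m]) 2 μ := by
  set g : Lp ℝ 2 μ := (condExpL2 ℝ ℝ hm (hf.toLp f)).1 with hg
  have hcond : g =ᵐ[μ] μ[f|m] := by
    refine ae_eq_condExp_of_forall_setIntegral_eq hm (hf.integrable one_le_two)
      (fun s _ hμs => (Lp.memLp g).integrable one_le_two |>.integrableOn)
      (fun s hs hμs => ?_) (lpMeas.aestronglyMeasurable _)
    rw [integral_condExpL2_eq hm (hf.toLp f) hs hμs.ne]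
    exact setIntegral_congr_ae (hm s hs) ((hf.coeFn_toLp).mono fun x hx _ => hx)
  exact (Lp.memLp g).ae_eq hcond

/-- `∫ (E[f|m])² ≤ ∫ f²` for `f ∈ L²`. -/
lemma integral_sq_condexp_le_aux {α : Type*} {m : MeasurableSpace α} {F : MeasurableSpace α}
    (hm : m ≤ F) (μ : Measure α) [IsProbabilityMeasure μ] {f : α → ℝ}
    (hf : MemLp f 2 μ) :
    ∫ ω, (μ[f|m]) ω ^ 2 ∂μ ≤ ∫ ω, f ω ^ 2 ∂μ := by
  set W : α → ℝ := μ[f|m] with hWdef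
  have hW : MemLp W 2 μ := memℒp_two_condexp_aux hm μ hf
  have hWf : Integrable (W * f) μ := by
    have := hf.smul (φ := W) hW (p := 2) (q := 2) (r := 1)
      (hpqr := ⟨by simp only [inv_one]; rw [ENNReal.inv_two_add_inv_two]⟩)
    rw [memLp_one_iff_integrable] at this
    simpa [Pi.smul_apply, smul_eq_mul] using this
  have h1 : μ[W * f|m] =ᵐ[μ] W * μ[f|m] :=
    condExp_mul_of_stronglyMeasurable_left stronglyMeasurable_condExp hWf (hf.integrable one_le_two)
  have h2 : ∫ ω, W ω * f ω ∂μ = ∫ ω, W ω ^ 2 ∂μ := by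
    calc ∫ ω, W ω * f ω ∂μ = ∫ ω, (W * f) ω ∂μ := rfl
      _ = ∫ ω, (μ[W * f|m]) ω ∂μ := (integral_condExp hm).symm
      _ = ∫ ω, (W * μ[f|m]) ω ∂μ := integral_congr_ae h1
      _ = ∫ ω, W ω ^ 2 ∂μ := by simp [← hWdef, sq]
  have hfsq : Integrable (fun ω => f ω ^ 2) μ := hf.integrable_sq
  have hWsq : Integrable (fun ω => W ω ^ 2) μ := hW.integrable_sq
  have key : ∫ ω, (f ω - W ω) ^ 2 ∂μ = ∫ ω, f ω ^ 2 ∂μ - ∫ ω, W ω ^ 2 ∂μ := by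
    have e : (fun ω => (f ω - W ω) ^ 2)
        = fun ω => f ω ^ 2 - 2 * (W ω * f ω) + W ω ^ 2 := funext fun ω => by ring
    have hWf' : Integrable (fun ω => 2 * (W ω * f ω)) μ := by
      simpa using hWf.const_mul 2
    have hsub : Integrable (fun ω => f ω ^ 2 - 2 * (W ω * f ω)) μ := hfsq.sub hWf'
    rw [e, integral_add hsub hWsq, integral_sub hfsq hWf', integral_const_mul 2 _, h2]
    ring
  have hnn : 0 ≤ ∫ ω, (f ω - W ω) ^ 2 ∂μ := integral_nonneg fun ω => sq_nonneg _
  linarith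

private lemma variance_congr_aux {α : Type*} {F : MeasurableSpace α} {μ : Measure α}
    {f g : α → ℝ} (h : f =ᵐ[μ] g) : variance f μ = variance g μ := by
  have hint : ∫ ω, f ω ∂μ = ∫ ω, g ω ∂μ := integral_congr_ae h
  unfold ProbabilityTheory.variance ProbabilityTheory.evariance
  congr 1
  apply lintegral_congr_ae
  filter_upwards [h] with ω hω
  rw [hω, hint]

/-- Variance expansion of the revealed aggregator: if `X_1, …, X_N` are square-integrable
reliable forecasts of a square-integrable `Y` and
`X'' = E[Y | σ(X_1, …, X_N)]` is the revealed aggregator, then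
`Var(X_j) ≤ Var(X'')` for every `j`; in particular `max_j Var(X_j) ≤ Var(X'')`. -/
theorem variance_le_variance_revealedAggregator {Ω : Type*} {F : MeasurableSpace Ω}
    (μ : Measure Ω) [IsProbabilityMeasure μ]
    (Y : Ω → ℝ) (hY : MemLp Y 2 μ)
    (N : ℕ) (X : Fin N → Ω → ℝ)
    (hXmeas : ∀ j, Measurable (X j))
    (hX2 : ∀ j, MemLp (X j) 2 μ)
    (hrel : ∀ j, μ[Y | MeasurableSpace.comap (X j) Real.measurableSpace] =ᵐ[μ] X j) :
    ∀ j, variance (X j) μ ≤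
      variance (μ[Y | ⨆ j, MeasurableSpace.comap (X j) Real.measurableSpace]) μ := by
  intro j
  set G : MeasurableSpace Ω := ⨆ j, MeasurableSpace.comap (X j) Real.measurableSpace with hGdef
  set m : MeasurableSpace Ω := MeasurableSpace.comap (X j) Real.measurableSpace with hmdef
  have hG : G ≤ F := iSup_le fun i => (hXmeas i).comap_le
  have hm : m ≤ F := (hXmeas j).comap_le
  have hmG : m ≤ G := le_iSup (fun i => MeasurableSpace.comap (X i) Real.measurableSpace) j
  set Z : Ω → ℝ := μ[Y|G] with hZdef
  have hZ : MemLp Z 2 μ := memℒp_two_condexp_aux hG μ hY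
  -- X j =ᵐ μ[Z|m]
  have hkey : X j =ᵐ[μ] μ[Z|m] :=
    ((hrel j).symm.trans (condExp_condExp_of_le hmG hG).symm)
  -- variance X j = variance μ[Z|m]
  rw [variance_congr_aux hkey]
  have hWm : MemLp (μ[Z|m]) 2 μ := memℒp_two_condexp_aux hm μ hZ
  rw [variance_eq_sub hWm, variance_eq_sub hZ]
  have hint : ∫ ω, (μ[Z|m]) ω ∂μ = ∫ ω, Z ω ∂μ := integral_condExp hm
  have hsq := integral_sq_condexp_le_aux hm μ hZ
  simp only [Pi.pow_apply] at *
  rw [hint]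
  linarith
end

section
/- Let Y be a square-integrable real random variable and let X_1, …, X_N be square-integrable reliable forecasts of Y, i.e., E[Y | σ(X_j)] = X_j almost surely for each j. Let w_1, …, w_N be nonnegative reals with w_1 + … + w_N = 1 and set X_w = Σ_{j=1}^N w_j X_j. Then E[(Y − X_w)²] = (E[Y²] − E[X_w²]) − Σ_{i=1}^N Σ_{j=1}^N w_i w_j E[(X_i − X_j)²]. -/
open MeasureTheory ProbabilityTheory

private lemma integrable_mul_of_memL2 {Ω : Type*} [MeasurableSpace Ω] {μ : Measure Ω}
    {f g : Ω → ℝ} (hf : MemLp f 2 μ) (hg : MemLp g 2 μ) :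
    Integrable (fun ω => f ω * g ω) μ := by
  have h : MemLp (f • g) 1 μ := hg.smul hf (r := 1)
  rw [memLp_one_iff_integrable] at h
  exact h

private lemma sum_alg {N : ℕ} (w : Fin N → ℝ) (hw1 : ∑ j, w j = 1)
    (a : Fin N → ℝ) (c : Fin N → Fin N → ℝ) (b C : ℝ)
    (hC : C = ∑ i, ∑ j, w i * w j * c i j) :
    b - 2 * ∑ j, w j * a j + C
      = (b - C) - ∑ i, ∑ j, w i * w j * (a i + a j - 2 * c i j) := by
  have h2 : ∑ i, ∑ j, w i * w j * (a i + a j - 2 * c i j)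
      = (∑ i, ∑ j, w i * w j * a i) + (∑ i, ∑ j, w i * w j * a j)
        - 2 * ∑ i, ∑ j, w i * w j * c i j := by
    simp_rw [Finset.mul_sum, ← Finset.sum_add_distrib, ← Finset.sum_sub_distrib]
    exact Finset.sum_congr rfl fun i _ => Finset.sum_congr rfl fun j _ => by ring
  have S1 : ∑ i, ∑ j, w i * w j * a i = ∑ i, w i * a i := by
    refine Finset.sum_congr rfl fun i _ => ?_
    have : ∑ j, w i * w j * a i = (w i * a i) * ∑ j, w j := by
      rw [Finset.mul_sum]; exact Finset.sum_congr rfl fun j _ => by ring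
    rw [this, hw1, mul_one]
  have S2 : ∑ i, ∑ j, w i * w j * a j = ∑ j, w j * a j := by
    have : ∀ i, ∑ j, w i * w j * a j = w i * ∑ j, w j * a j := by
      intro i
      rw [Finset.mul_sum]; exact Finset.sum_congr rfl fun j _ => by ring
    simp_rw [this, ← Finset.sum_mul, hw1, one_mul]
  rw [h2, S1, S2, ← hC]
  ring

/-- Quadratic-loss identity for the weighted average of reliable forecasts:
`E[(Y − X_w)²] = (E[Y²] − E[X_w²]) − Σ_i Σ_j w_i w_j E[(X_i − X_j)²]`,
where `X_w = Σ_j w_j X_j`. -/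
theorem sq_loss_weightedAverage {Ω : Type*} {F : MeasurableSpace Ω}
    (μ : Measure Ω) [IsProbabilityMeasure μ]
    (Y : Ω → ℝ) (hY : MemLp Y 2 μ)
    (N : ℕ) (X : Fin N → Ω → ℝ)
    (hXmeas : ∀ j, Measurable (X j))
    (hX2 : ∀ j, MemLp (X j) 2 μ)
    (hrel : ∀ j, μ[Y | MeasurableSpace.comap (X j) Real.measurableSpace] =ᵐ[μ] X j)
    (w : Fin N → ℝ) (hw : ∀ j, 0 ≤ w j) (hw1 : ∑ j, w j = 1) :
    ∫ ω, (Y ω - ∑ j, w j * X j ω) ^ 2 ∂μ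
      = (∫ ω, (Y ω) ^ 2 ∂μ - ∫ ω, (∑ j, w j * X j ω) ^ 2 ∂μ)
        - ∑ i, ∑ j, w i * w j * ∫ ω, (X i ω - X j ω) ^ 2 ∂μ := by
  classical
  have hYint : Integrable Y μ := hY.integrable (by norm_num)
  have hXXint : ∀ i j, Integrable (fun ω => X i ω * X j ω) μ :=
    fun i j => integrable_mul_of_memL2 (hX2 i) (hX2 j)
  have hXYint : ∀ j, Integrable (fun ω => X j ω * Y ω) μ :=
    fun j => integrable_mul_of_memL2 (hX2 j) hY
  have hY2int : Integrable (fun ω => Y ω ^ 2) μ := hY.integrable_sq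
  -- key: reliability gives E[X_j Y] = E[X_j^2]
  have hkey : ∀ j, ∫ ω, X j ω * Y ω ∂μ = ∫ ω, X j ω * X j ω ∂μ := by
    intro j
    set m := MeasurableSpace.comap (X j) Real.measurableSpace with hm_def
    have hm : m ≤ F := (hXmeas j).comap_le
    haveI : SigmaFinite (μ.trim hm) := by infer_instance
    have hXm : StronglyMeasurable[m] (X j) := by
      refine Measurable.stronglyMeasurable ?_
      exact Measurable.of_comap_le le_rfl
    have h1 : μ[(X j) * Y | m] =ᵐ[μ] (X j) * μ[Y | m] :=
      condExp_mul_of_stronglyMeasurable_left hXm (hXYint j) hYint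
    have h2 : (X j) * μ[Y | m] =ᵐ[μ] fun ω => X j ω * X j ω := by
      filter_upwards [hrel j] with ω hω
      simp [Pi.mul_apply, hm_def, hω]
    calc ∫ ω, X j ω * Y ω ∂μ
        = ∫ ω, (μ[(X j) * Y | m]) ω ∂μ := by
          rw [integral_condExp hm]
          rfl
      _ = ∫ ω, X j ω * X j ω ∂μ := integral_congr_ae (h1.trans h2)
  -- expansions
  have hYS : ∫ ω, Y ω * (∑ j, w j * X j ω) ∂μ = ∑ j, w j * ∫ ω, X j ω * Y ω ∂μ := by
    have h : ∀ ω, Y ω * (∑ j, w j * X j ω) = ∑ j, w j * (X j ω * Y ω) := by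
      intro ω; rw [Finset.mul_sum]; exact Finset.sum_congr rfl fun j _ => by ring
    rw [integral_congr_ae (Filter.Eventually.of_forall h),
      integral_finset_sum _ fun j _ => (hXYint j).const_mul (w j)]
    exact Finset.sum_congr rfl fun j _ => integral_const_mul _ _
  have hSS : ∫ ω, (∑ j, w j * X j ω) ^ 2 ∂μ
      = ∑ i, ∑ j, w i * w j * ∫ ω, X i ω * X j ω ∂μ := by
    have h : ∀ ω, (∑ j, w j * X j ω) ^ 2 = ∑ i, ∑ j, w i * w j * (X i ω * X j ω) := by
      intro ω
      rw [sq, Finset.sum_mul_sum]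
      exact Finset.sum_congr rfl fun i _ => Finset.sum_congr rfl fun j _ => by ring
    rw [integral_congr_ae (Filter.Eventually.of_forall h),
      integral_finset_sum _ fun i _ =>
        integrable_finset_sum _ fun j _ => (hXXint i j).const_mul _]
    refine Finset.sum_congr rfl fun i _ => ?_
    rw [integral_finset_sum _ fun j _ => (hXXint i j).const_mul _]
    exact Finset.sum_congr rfl fun j _ => integral_const_mul _ _
  have hdiff : ∀ i j, ∫ ω, (X i ω - X j ω) ^ 2 ∂μ
      = ∫ ω, X i ω * X i ω ∂μ + ∫ ω, X j ω * X j ω ∂μ - 2 * ∫ ω, X i ω * X j ω ∂μ := by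
    intro i j
    have h : ∀ ω, (X i ω - X j ω) ^ 2
        = X i ω * X i ω + X j ω * X j ω - 2 * (X i ω * X j ω) := fun ω => by ring
    have hii : Integrable (fun ω => X i ω * X i ω + X j ω * X j ω) μ :=
      (hXXint i i).add (hXXint j j)
    have hij : Integrable (fun ω => 2 * (X i ω * X j ω)) μ := (hXXint i j).const_mul 2
    rw [integral_congr_ae (Filter.Eventually.of_forall h), integral_sub hii hij,
      integral_add (hXXint i i) (hXXint j j), integral_const_mul]
  -- memℒp of the weighted sum
  have hS2 : MemLp (fun ω => ∑ j, w j * X j ω) 2 μ :=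
    memLp_finset_sum _ fun j _ => (hX2 j).const_mul (w j)
  have hLHS : ∫ ω, (Y ω - ∑ j, w j * X j ω) ^ 2 ∂μ
      = ∫ ω, Y ω ^ 2 ∂μ - 2 * ∫ ω, Y ω * (∑ j, w j * X j ω) ∂μ
        + ∫ ω, (∑ j, w j * X j ω) ^ 2 ∂μ := by
    have hYSint : Integrable (fun ω => Y ω * (∑ j, w j * X j ω)) μ :=
      integrable_mul_of_memL2 hY hS2
    have hS2int : Integrable (fun ω => (∑ j, w j * X j ω) ^ 2) μ := hS2.integrable_sq
    have h : ∀ ω, (Y ω - ∑ j, w j * X j ω) ^ 2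
        = Y ω ^ 2 - 2 * (Y ω * (∑ j, w j * X j ω)) + (∑ j, w j * X j ω) ^ 2 := fun ω => by ring
    have hsub : Integrable (fun ω => Y ω ^ 2 - 2 * (Y ω * (∑ j, w j * X j ω))) μ :=
      hY2int.sub (hYSint.const_mul 2)
    have h2YS : Integrable (fun ω => 2 * (Y ω * (∑ j, w j * X j ω))) μ := hYSint.const_mul 2
    rw [integral_congr_ae (Filter.Eventually.of_forall h),
      integral_add hsub hS2int, integral_sub hY2int h2YS, integral_const_mul]
  -- final algebra
  rw [hLHS, hYS, hSS]
  simp_rw [hdiff, hkey]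
  exact sum_alg w hw1 (fun i => ∫ ω, X i ω * X i ω ∂μ)
    (fun i j => ∫ ω, X i ω * X j ω ∂μ) _ _ rfl
end

section
/- Let Y be a square-integrable real random variable and let X_1, …, X_N be square-integrable reliable forecasts of Y, i.e., E[Y | σ(X_j)] = X_j almost surely for each j. Let w_1, …, w_N be nonnegative reals with w_1 + … + w_N = 1 and set X_w = Σ_{j=1}^N w_j X_j. If there exist indices i ≠ j with w_i > 0, w_j > 0, and P(X_i ≠ X_j) > 0, then X_w is not a reliable forecast of Y; that is, P( E[Y | σ(X_w)] ≠ X_w ) > 0. -/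
open MeasureTheory ProbabilityTheory

lemma int_mul' {Ω : Type*} {F : MeasurableSpace Ω} {μ : Measure Ω} {f g : Ω → ℝ}
    (hf : MemLp f 2 μ) (hg : MemLp g 2 μ) : Integrable (fun x => f x * g x) μ := by
  have h : (fun x => f x * g x) = fun x => ((f x + g x)^2 - f x ^2 - g x ^2)/2 := by
    funext x; ring
  rw [h]
  exact (((hf.add hg).integrable_sq.sub hf.integrable_sq).sub hg.integrable_sq).div_const 2

lemma reliable_integral' {Ω : Type*} {F : MeasurableSpace Ω} (μ : Measure Ω)
    [IsProbabilityMeasure μ] {Y Xf : Ω → ℝ}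
    (hY : MemLp Y 2 μ) (hXm : Measurable Xf) (hX2 : MemLp Xf 2 μ)
    (hrel : μ[Y | MeasurableSpace.comap Xf Real.measurableSpace] =ᵐ[μ] Xf) :
    ∫ ω, Xf ω * Y ω ∂μ = ∫ ω, Xf ω ^ 2 ∂μ := by
  set m := MeasurableSpace.comap Xf Real.measurableSpace with hm_def
  have hm : m ≤ F := hXm.comap_le
  have hXsm : StronglyMeasurable[m] Xf :=
    (Measurable.le (le_refl m) (measurable_iff_comap_le.mpr le_rfl)).stronglyMeasurable
  have hXY : Integrable (Xf * Y) μ := int_mul' hX2 hY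
  have hYint : Integrable Y μ := hY.integrable one_le_two
  have h1 : μ[Xf * Y | m] =ᵐ[μ] Xf * μ[Y | m] :=
    condExp_mul_of_stronglyMeasurable_left hXsm hXY hYint
  calc ∫ ω, Xf ω * Y ω ∂μ = ∫ ω, (μ[Xf * Y | m]) ω ∂μ := (integral_condExp hm (f := Xf * Y)).symm
    _ = ∫ ω, (Xf * μ[Y|m]) ω ∂μ := integral_congr_ae h1
    _ = ∫ ω, Xf ω ^ 2 ∂μ := integral_congr_ae (by
        filter_upwards [hrel] with ω h
        simp only [Pi.mul_apply, h]; ring)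

lemma key_ineq' {N : ℕ} (w x : Fin N → ℝ) (hw : ∀ j, 0 ≤ w j) (hw1 : ∑ j, w j = 1)
    (i j : Fin N) (hij : i ≠ j) :
    w i * w j * (x i - x j)^2 ≤ (∑ k, w k * (x k)^2) - (∑ k, w k * x k)^2 := by
  set m := ∑ k, w k * x k with hm
  have hvar : (∑ k, w k * (x k)^2) - m^2 = ∑ k, w k * (x k - m)^2 := by
    have h1 : ∑ k, w k * (x k - m)^2
        = ∑ k, (w k * x k ^2 - 2*m*(w k * x k) + m^2 * w k) :=
      Finset.sum_congr rfl fun k _ => by ring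
    rw [h1, Finset.sum_add_distrib, Finset.sum_sub_distrib, ← Finset.mul_sum, ← Finset.mul_sum,
      ← hm, hw1]
    ring
  rw [hvar]
  have hsub : w i * (x i - m)^2 + w j * (x j - m)^2 ≤ ∑ k, w k * (x k - m)^2 := by
    have h2 := Finset.sum_le_sum_of_subset_of_nonneg (f := fun k => w k * (x k - m)^2)
      (Finset.subset_univ ({i, j} : Finset (Fin N)))
      (fun k _ _ => mul_nonneg (hw k) (sq_nonneg _))
    rwa [Finset.sum_pair hij] at h2
  have hwij : w i + w j ≤ 1 := by
    have h3 := Finset.sum_le_sum_of_subset_of_nonneg (Finset.subset_univ ({i, j} : Finset (Fin N)))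
      (fun k _ _ => hw k)
    rw [Finset.sum_pair hij, hw1] at h3
    exact h3
  have hnn : 0 ≤ w i * (x i - m)^2 + w j * (x j - m)^2 :=
    add_nonneg (mul_nonneg (hw i) (sq_nonneg _)) (mul_nonneg (hw j) (sq_nonneg _))
  nlinarith [sq_nonneg (w i * (x i - m) + w j * (x j - m)), hw i, hw j,
    mul_nonneg (sub_nonneg.mpr hwij) hnn]

/-- A non-trivial weighted average of reliable forecasts is not reliable: if positive
weight is assigned to two forecasts that differ with positive probability, then
`P( E[Y | σ(X_w)] ≠ X_w ) > 0` for `X_w = Σ_j w_j X_j`. -/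
theorem weightedAverage_not_reliable {Ω : Type*} {F : MeasurableSpace Ω}
    (μ : Measure Ω) [IsProbabilityMeasure μ]
    (Y : Ω → ℝ) (hY : MemLp Y 2 μ)
    (N : ℕ) (X : Fin N → Ω → ℝ)
    (hXmeas : ∀ j, Measurable (X j))
    (hX2 : ∀ j, MemLp (X j) 2 μ)
    (hrel : ∀ j, μ[Y | MeasurableSpace.comap (X j) Real.measurableSpace] =ᵐ[μ] X j)
    (w : Fin N → ℝ) (hw : ∀ j, 0 ≤ w j) (hw1 : ∑ j, w j = 1)
    (i j : Fin N) (hij : i ≠ j) (hwi : 0 < w i) (hwj : 0 < w j)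
    (hdiff : 0 < μ {ω | X i ω ≠ X j ω}) :
    0 < μ {ω | (μ[Y | MeasurableSpace.comap (fun ω => ∑ j, w j * X j ω)
        Real.measurableSpace]) ω ≠ ∑ j, w j * X j ω} := by
  by_contra hcon
  push_neg at hcon
  set Xw : Ω → ℝ := fun ω => ∑ k, w k * X k ω with hXw_def
  have hXwmeas : Measurable Xw :=
    Finset.measurable_sum _ (fun k _ => (measurable_const.mul (hXmeas k)))
  have hXw2 : MemLp Xw 2 μ :=
    memLp_finset_sum _ (fun k _ => (hX2 k).const_mul (w k))
  have hrelw : μ[Y | MeasurableSpace.comap Xw Real.measurableSpace] =ᵐ[μ] Xw := by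
    rw [Filter.EventuallyEq, ae_iff]
    exact le_antisymm hcon zero_le
  -- each X k satisfies ∫ X k * Y = ∫ X k ^ 2
  have hXkY : ∀ k, ∫ ω, X k ω * Y ω ∂μ = ∫ ω, X k ω ^ 2 ∂μ :=
    fun k => reliable_integral' μ hY (hXmeas k) (hX2 k) (hrel k)
  have hXwY : ∫ ω, Xw ω * Y ω ∂μ = ∫ ω, Xw ω ^ 2 ∂μ :=
    reliable_integral' μ hY hXwmeas hXw2 hrelw
  -- linearity: ∫ Xw * Y = ∑ k, w k * ∫ X k * Y
  have hlin : ∫ ω, Xw ω * Y ω ∂μ = ∑ k, w k * ∫ ω, X k ω * Y ω ∂μ := by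
    have h1 : (fun ω => Xw ω * Y ω) = fun ω => ∑ k, w k * (X k ω * Y ω) := by
      funext ω
      rw [hXw_def]
      rw [Finset.sum_mul]
      exact Finset.sum_congr rfl fun k _ => by ring
    rw [h1, integral_finset_sum _ (fun k _ => (int_mul' (hX2 k) hY).const_mul (w k))]
    exact Finset.sum_congr rfl fun k _ => integral_const_mul _ _
  -- hence ∫ Xw^2 = ∑ k, w k * ∫ X k ^ 2
  have hmain : ∫ ω, Xw ω ^ 2 ∂μ = ∑ k, w k * ∫ ω, X k ω ^ 2 ∂μ := by
    rw [← hXwY, hlin]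
    exact Finset.sum_congr rfl fun k _ => by rw [hXkY k]
  -- integrability facts
  have hintS : Integrable (fun ω => ∑ k, w k * X k ω ^ 2) μ :=
    integrable_finset_sum _ (fun k _ => ((hX2 k).integrable_sq).const_mul (w k))
  have hintXw2 : Integrable (fun ω => Xw ω ^ 2) μ := hXw2.integrable_sq
  have hintd : Integrable (fun ω => (X i ω - X j ω) ^ 2) μ := ((hX2 i).sub (hX2 j)).integrable_sq
  -- positivity of ∫ (X i - X j)^2
  have hpos : 0 < ∫ ω, (X i ω - X j ω) ^ 2 ∂μ := by
    rw [integral_pos_iff_support_of_nonneg (fun ω => sq_nonneg _) hintd]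
    convert hdiff using 2
    ext ω
    simp [Function.support, sub_eq_zero, pow_eq_zero_iff, Set.mem_setOf_eq]
  -- pointwise key inequality integrated
  have hmono : ∫ ω, w i * w j * (X i ω - X j ω) ^ 2 ∂μ
      ≤ ∫ ω, (∑ k, w k * X k ω ^ 2) - Xw ω ^ 2 ∂μ := by
    refine integral_mono (hintd.const_mul _) (hintS.sub hintXw2) ?_
    intro ω
    exact key_ineq' w (fun k => X k ω) hw hw1 i j hij
  rw [integral_const_mul, integral_sub hintS hintXw2,
    integral_finset_sum _ (fun k _ => ((hX2 k).integrable_sq).const_mul (w k))] at hmono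
  have hsum : ∑ k, ∫ ω, w k * X k ω ^ 2 ∂μ = ∑ k, w k * ∫ ω, X k ω ^ 2 ∂μ :=
    Finset.sum_congr rfl fun k _ => integral_const_mul _ _
  rw [hsum, ← hmain, sub_self] at hmono
  nlinarith [mul_pos (mul_pos hwi hwj) hpos]
end

section
/- Let K ≥ 1 and let y_1, …, y_K and x_1, …, x_K be real numbers such that each x_k belongs to the finite set of distinct values {f_1, …, f_I}. For each i let K_i be the number of indices k with x_k = f_i, assume K_i > 0 for every i, let Ȳ_i = (1/K_i) Σ_{k : x_k = f_i} y_k be the average of the y_k over those indices, and let Ȳ = (1/K) Σ_{k=1}^K y_k. Then (1/K) Σ_{k=1}^K (y_k − x_k)² = (1/K) Σ_{i=1}^I K_i (f_i − Ȳ_i)² − (1/K) Σ_{i=1}^I K_i (Ȳ_i − Ȳ)² + (1/K) Σ_{k=1}^K (y_k − Ȳ)²; that is, the average quadratic loss decomposes into reliability minus resolution plus uncertainty. -/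
lemma sum_sq_shift {α : Type*} (s : Finset α) (y : α → ℝ) (m c : ℝ)
    (h : ∑ k ∈ s, y k = (s.card : ℝ) * m) :
    ∑ k ∈ s, (y k - c) ^ 2 = (s.card : ℝ) * (m - c) ^ 2 + ∑ k ∈ s, (y k - m) ^ 2 := by
  have e : ∀ k, (y k - c) ^ 2 = (y k - m) ^ 2 + (2 * (m - c)) * y k + (c ^ 2 - m ^ 2) := by
    intro k; ring
  simp only [e, Finset.sum_add_distrib, ← Finset.mul_sum, h, Finset.sum_const,
    nsmul_eq_mul]
  ring

/-- Decomposition of the average quadratic loss into reliability minus resolution plus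
uncertainty: if each forecast `x k` takes one of the distinct values `f 1, …, f I`,
`K_i` counts occurrences of `f i`, `Ȳ_i` is the average outcome over those occurrences,
and `Ȳ` is the overall average outcome, then
`(1/K) Σ_k (y_k − x_k)² = (1/K) Σ_i K_i (f_i − Ȳ_i)² − (1/K) Σ_i K_i (Ȳ_i − Ȳ)²
  + (1/K) Σ_k (y_k − Ȳ)²`. -/
theorem quadratic_loss_decomposition
    (K I : ℕ) (hK : 1 ≤ K)
    (y x : Fin K → ℝ) (f : Fin I → ℝ)
    (hf : Function.Injective f)
    (hx : ∀ k, ∃ i, x k = f i)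
    (Ki : Fin I → ℕ)
    (hKi : ∀ i, Ki i = (Finset.univ.filter (fun k => x k = f i)).card)
    (hKipos : ∀ i, 0 < Ki i)
    (Ybari : Fin I → ℝ)
    (hYbari : ∀ i,
      Ybari i = (∑ k ∈ Finset.univ.filter (fun k => x k = f i), y k) / (Ki i : ℝ))
    (Ybar : ℝ) (hYbar : Ybar = (∑ k, y k) / (K : ℝ)) :
    (∑ k, (y k - x k) ^ 2) / (K : ℝ)
      = (∑ i, (Ki i : ℝ) * (f i - Ybari i) ^ 2) / (K : ℝ)
        - (∑ i, (Ki i : ℝ) * (Ybari i - Ybar) ^ 2) / (K : ℝ)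
        + (∑ k, (y k - Ybar) ^ 2) / (K : ℝ) := by
  rw [← sub_div, ← add_div]
  congr 1
  -- fibering map
  choose g hg using hx
  set s : Fin I → Finset (Fin K) := fun i => Finset.univ.filter (fun k => x k = f i) with hs
  have hfilter : ∀ i, Finset.univ.filter (fun k => g k = i) = s i := by
    intro i
    apply Finset.filter_congr
    intro k _
    constructor
    · rintro rfl; exact hg k
    · intro h; exact hf ((hg k).symm.trans h)
  have hcard : ∀ i, ((Finset.univ.filter (fun k => x k = f i)).card : ℝ) ≠ 0 := by
    intro i
    have := hKipos i
    rw [hKi i] at this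
    exact_mod_cast this.ne'
  have hsum : ∀ i, ∑ k ∈ s i, y k = ((s i).card : ℝ) * Ybari i := by
    intro i
    simp only [hs]
    rw [hYbari i, hKi i, mul_div_cancel₀ _ (hcard i)]
  have hfib : ∀ F : Fin K → ℝ, ∑ k, F k = ∑ i, ∑ k ∈ s i, F k := by
    intro F
    rw [← Finset.sum_fiberwise Finset.univ g F]
    exact Finset.sum_congr rfl fun i _ => by rw [hfilter i]
  have hA : ∀ i, ∑ k ∈ s i, (y k - x k) ^ 2
      = ((s i).card : ℝ) * (f i - Ybari i) ^ 2 - ((s i).card : ℝ) * (Ybari i - Ybar) ^ 2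
        + ∑ k ∈ s i, (y k - Ybar) ^ 2 := by
    intro i
    have h1 : ∑ k ∈ s i, (y k - x k) ^ 2 = ∑ k ∈ s i, (y k - f i) ^ 2 := by
      apply Finset.sum_congr rfl
      intro k hk
      simp only [hs, Finset.mem_filter] at hk
      rw [hk.2]
    rw [h1, sum_sq_shift (s i) y (Ybari i) (f i) (hsum i),
      sum_sq_shift (s i) y (Ybari i) Ybar (hsum i)]
    ring
  rw [hfib (fun k => (y k - x k) ^ 2), hfib (fun k => (y k - Ybar) ^ 2)]
  simp only [hA]
  rw [Finset.sum_add_distrib, Finset.sum_sub_distrib]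
  have hKieq : ∀ i, (Ki i : ℝ) = ((s i).card : ℝ) := fun i => by simp only [hKi i, hs]
  simp only [hKieq]
end
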